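/- In Cl_6, let μ₁₂ and μ₁₅ be real numbers with μ₁₅ ≠ 0, and let λ₁₂, λ₁₃ be arbitrary real numbers. Then the element x = μ₁₂ • (e₅*e₁*e₂) + λ₁₂ • (e₆*e₁*e₂) + λ₁₃ • (e₆*e₁*e₃) + μ₁₅ • (e₆*e₁*e₅) is a unit of Cl_6. (x is 4× the invariant Dirac operator of a metric on the 6-dimensional decomposable nilpotent Lie algebra L₄⊕A₂; its invertibility proves the paper's claim, in the Theorem on 6-dimensional decomposable nilmanifolds, that L₄⊕A₂ admits no left-invariant harmonic spinors.) -/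
import Mathlib


open scoped BigOperators

/-- The negative-definite quadratic form `Q v = -∑ i, (v i)^2` on `EuclideanSpace ℝ (Fin n)`. -/
noncomputable def Q (n : ℕ) : QuadraticForm ℝ (EuclideanSpace ℝ (Fin n)) :=
  QuadraticMap.ofPolar (fun v => -∑ i, v i ^ 2)
    (fun a v => by
      simp only [PiLp.smul_apply, smul_eq_mul, mul_pow]
      rw [← Finset.mul_sum]
      ring)
    (fun x x' y => by
      have h : ∀ (u w : EuclideanSpace ℝ (Fin n)),
          QuadraticMap.polar (fun v : EuclideanSpace ℝ (Fin n) => -∑ i, v i ^ 2) u w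
            = -(2 * ∑ i, u i * w i) := by
        intro u w
        have hsq : ∀ i, (u i + w i) ^ 2 = u i ^ 2 + w i ^ 2 + 2 * (u i * w i) := fun i => by ring
        simp_rw [QuadraticMap.polar, PiLp.add_apply, hsq, Finset.sum_add_distrib,
          ← Finset.mul_sum]
        ring
      simp_rw [h, PiLp.add_apply, add_mul, Finset.sum_add_distrib]
      ring)
    (fun a x y => by
      have h : ∀ (u w : EuclideanSpace ℝ (Fin n)),
          QuadraticMap.polar (fun v : EuclideanSpace ℝ (Fin n) => -∑ i, v i ^ 2) u w
            = -(2 * ∑ i, u i * w i) := by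
        intro u w
        have hsq : ∀ i, (u i + w i) ^ 2 = u i ^ 2 + w i ^ 2 + 2 * (u i * w i) := fun i => by ring
        simp_rw [QuadraticMap.polar, PiLp.add_apply, hsq, Finset.sum_add_distrib,
          ← Finset.mul_sum]
        ring
      simp_rw [h, PiLp.smul_apply, smul_eq_mul, mul_assoc, ← Finset.mul_sum]
      ring)

lemma Q_apply {n : ℕ} (v : EuclideanSpace ℝ (Fin n)) : Q n v = -∑ i, v i ^ 2 := rfl
/-- The image in the Clifford algebra `Cl_n` of the `i`-th standard basis vector. -/
noncomputable def e {n : ℕ} (i : Fin n) : CliffordAlgebra (Q n) :=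
  CliffordAlgebra.ι (Q n) (EuclideanSpace.single i 1)

lemma e_sq {n : ℕ} (i : Fin n) : e i * e i = -1 := by
  unfold e
  rw [CliffordAlgebra.ι_sq_scalar]
  have : Q n (EuclideanSpace.single i 1) = -1 := by
    rw [Q_apply]; simp [EuclideanSpace.single_apply]
  rw [this]; simp

lemma e_swap {n : ℕ} {i j : Fin n} (h : j < i) : e i * e j = -(e j * e i) := by
  unfold e
  have hp := CliffordAlgebra.ι_mul_ι_add_swap (Q := Q n)
    (EuclideanSpace.single i 1) (EuclideanSpace.single j 1)
  have hpol : QuadraticMap.polar (Q n) (EuclideanSpace.single i 1) (EuclideanSpace.single j 1) = 0 := by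
    unfold QuadraticMap.polar
    simp only [Q_apply, PiLp.add_apply, EuclideanSpace.single_apply]
    have : ∀ k : Fin n, ((if k = i then (1:ℝ) else 0) + if k = j then 1 else 0) ^ 2
        = (if k = i then (1:ℝ) else 0) ^ 2 + (if k = j then (1:ℝ) else 0) ^ 2 := by
      intro k
      rcases eq_or_ne k i with rfl|hi <;> rcases eq_or_ne k j with rfl|hj <;> simp_all
    simp_rw [this, Finset.sum_add_distrib]
    ring
  rw [hpol] at hp
  simp only [map_zero] at hp
  linear_combination (norm := noncomm_ring) hp

lemma e_sq_mul {n : ℕ} (i : Fin n) (c : CliffordAlgebra (Q n)) : e i * (e i * c) = -c := by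
  rw [← mul_assoc, e_sq]; simp

lemma e_swap_mul {n : ℕ} {i j : Fin n} (h : j < i) (c : CliffordAlgebra (Q n)) :
    e i * (e j * c) = -(e j * (e i * c)) := by
  rw [← mul_assoc, e_swap h]; simp [mul_assoc]
/-- **`L₄⊕A₂` admits no left-invariant harmonic spinors.** In `Cl₆`, with `μ₁₅ ≠ 0`, the element
`x = μ₁₂ • (e₅e₁e₂) + λ₁₂ • (e₆e₁e₂) + λ₁₃ • (e₆e₁e₃) + μ₁₅ • (e₆e₁e₅)` is a unit. -/
theorem clifford_L4A2_dirac (μ₁₂ μ₁₅ lam₁₂ lam₁₃ : ℝ) (hμ₁₅ : μ₁₅ ≠ 0)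
    (x : CliffordAlgebra (Q 6))
    (hx : x = μ₁₂ • (e (4 : Fin 6) * e 0 * e 1) + lam₁₂ • (e (5 : Fin 6) * e 0 * e 1)
        + lam₁₃ • (e (5 : Fin 6) * e 0 * e 2) + μ₁₅ • (e (5 : Fin 6) * e 0 * e 4)) :
    IsUnit x := by
  set S : ℝ := μ₁₂^2 + lam₁₂^2 + lam₁₃^2 + μ₁₅^2 with hS
  set t : ℝ := 2*μ₁₂*lam₁₃ with ht
  set B : CliffordAlgebra (Q 6) := e (1:Fin 6) * (e 2 * (e 4 * e 5)) with hB
  have key : x * x = S • (1 : CliffordAlgebra (Q 6)) + t • B := by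
    subst hx
    simp only [mul_add, add_mul, smul_mul_smul_comm, mul_assoc]
    simp (disch := decide) only [e_swap_mul, e_sq_mul, e_swap, e_sq, neg_neg, mul_neg, neg_mul,
      mul_one, smul_neg, mul_smul_comm, smul_mul_assoc, one_smul]
    module
  have hB2 : B * B = 1 := by
    rw [hB]
    simp only [mul_assoc]
    simp (disch := decide) only [e_swap_mul, e_sq_mul, e_swap, e_sq, neg_neg, mul_neg, neg_mul,
      mul_one]
  have h4 : x * x * (x * x) = (2*S) • (x*x) - (S^2 - t^2) • (1 : CliffordAlgebra (Q 6)) := by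
    rw [key]
    simp only [mul_add, add_mul, smul_mul_smul_comm, smul_mul_assoc, mul_smul_comm, one_mul,
      mul_one, hB2]
    module
  have hc : S^2 - t^2 ≠ 0 := by
    have hp : 0 < μ₁₅^2 := by positivity
    have h1 : S - t > 0 := by nlinarith [sq_nonneg (μ₁₂ - lam₁₃), sq_nonneg lam₁₂, sq_nonneg μ₁₅, hp]
    have h2 : S + t > 0 := by nlinarith [sq_nonneg (μ₁₂ + lam₁₃), sq_nonneg lam₁₂, sq_nonneg μ₁₅, hp]
    nlinarith
  refine isUnit_iff_exists.mpr ⟨(S^2 - t^2)⁻¹ • ((2*S) • x - x*x*x), ?_, ?_⟩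
  · rw [mul_smul_comm, mul_sub, mul_smul_comm, ← mul_assoc, ← mul_assoc]
    rw [show x*x*x*x = x*x*(x*x) by noncomm_ring, h4]
    simp only [smul_sub, smul_smul, sub_sub_cancel, inv_mul_cancel₀ hc, one_smul]
  · rw [smul_mul_assoc, sub_mul, smul_mul_assoc]
    rw [show x*x*x*x = x*x*(x*x) by noncomm_ring, h4]
    simp only [smul_sub, smul_smul, sub_sub_cancel, inv_mul_cancel₀ hc, one_smul]
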